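/- For the graph G on m+n vertices which is the disjoint union of complete graphs K_m and K_n (the complement of K_{m,n}), ε(G) = m(m-1)(m-2)/2 + n(n-1)(n-2)/2 + C(m,2)·C(n,2). -/

import Mathlib

/-!
An edge of `G ⊕g H` lies in one of the two components. Two edges in different components are
always counted: no edge of `G ⊕g H` joins them, so their endpoints carry no 4-cycle. Two edges in
the same component are counted exactly when they are counted there, since a 4-cycle on their
endpoints lies in that component. Hence `ε(G ⊕g H) = ε(G) + ε(H) + |E(G)| |E(H)|`.
In a complete graph any two disjoint edges span a 4-cycle, so `ε(K_k)` counts the pairs of edges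
through a common vertex, `∑ v, (deg v).choose 2 = k * (k - 1).choose 2`.
The complement of `K_{m,n}` is `K_m ⊕g K_n`.
-/

open Finset SimpleGraph

/-- A 4-cycle exists within the vertex set `s` of the graph `G`. -/
def fourCycleOn {V : Type*} (G : SimpleGraph V) (s : Set V) : Prop :=
  ∃ a b c d, a ∈ s ∧ b ∈ s ∧ c ∈ s ∧ d ∈ s ∧
    a ≠ b ∧ a ≠ c ∧ a ≠ d ∧ b ≠ c ∧ b ≠ d ∧ c ≠ d ∧
    G.Adj a b ∧ G.Adj b c ∧ G.Adj c d ∧ G.Adj d a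

/-- The pair of edges `{e,f}` spans an edge of the edge polytope: they share a
vertex, or they are disjoint and the induced subgraph on their endpoints has no 4-cycle. -/
def epPair {V : Type*} (G : SimpleGraph V) (e f : Sym2 V) : Prop :=
  (∃ v, v ∈ e ∧ v ∈ f) ∨
  ((¬ ∃ v, v ∈ e ∧ v ∈ f) ∧ ¬ fourCycleOn G {v | v ∈ e ∨ v ∈ f})

open scoped Classical in
/-- The number of edges (1-dimensional faces) of the edge polytope of `G`:
the number of unordered pairs of distinct edges satisfying `epPair`. -/
noncomputable def epsilon {V : Type*} [Fintype V] (G : SimpleGraph V) : ℕ :=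
  ((G.edgeFinset.powersetCard 2).filter
    (fun s => ∀ e ∈ s, ∀ f ∈ s, e ≠ f → epPair G e f)).card

open scoped Classical in
/-- number of 4-subsets inducing a path of length 3. -/
noncomputable def aCount {V : Type*} [Fintype V] (H : SimpleGraph V) : ℕ :=
  ((univ.powersetCard 4).filter (fun s => ∃ a b c d : V,
    s = {a, b, c, d} ∧ a ≠ b ∧ a ≠ c ∧ a ≠ d ∧ b ≠ c ∧ b ≠ d ∧ c ≠ d ∧
    H.Adj a b ∧ H.Adj b c ∧ H.Adj c d ∧ ¬H.Adj a c ∧ ¬H.Adj a d ∧ ¬H.Adj b d)).card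

open scoped Classical in
/-- number of 4-subsets inducing a cycle of length 4. -/
noncomputable def bCount {V : Type*} [Fintype V] (H : SimpleGraph V) : ℕ :=
  ((univ.powersetCard 4).filter (fun s => ∃ a b c d : V,
    s = {a, b, c, d} ∧ a ≠ b ∧ a ≠ c ∧ a ≠ d ∧ b ≠ c ∧ b ≠ d ∧ c ≠ d ∧
    H.Adj a b ∧ H.Adj b c ∧ H.Adj c d ∧ H.Adj d a ∧ ¬H.Adj a c ∧ ¬H.Adj b d)).card

open scoped Classical in
/-- number of 4-subsets inducing a path of length 2 plus an isolated vertex. -/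
noncomputable def cCount {V : Type*} [Fintype V] (H : SimpleGraph V) : ℕ :=
  ((univ.powersetCard 4).filter (fun s => ∃ a b c d : V,
    s = {a, b, c, d} ∧ a ≠ b ∧ a ≠ c ∧ a ≠ d ∧ b ≠ c ∧ b ≠ d ∧ c ≠ d ∧
    H.Adj a b ∧ H.Adj b c ∧ ¬H.Adj a c ∧ ¬H.Adj a d ∧ ¬H.Adj b d ∧ ¬H.Adj c d)).card

open scoped Classical in
/-- the number of triangles of `H`. -/
noncomputable def k3 {V : Type*} [Fintype V] (H : SimpleGraph V) : ℕ :=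
  ((univ.powersetCard 3).filter (fun s => ∀ i ∈ s, ∀ j ∈ s, i ≠ j → H.Adj i j)).card

open scoped Classical in
/-- the number of 3-subsets inducing a path with exactly two edges. -/
noncomputable def psi {V : Type*} [Fintype V] (H : SimpleGraph V) : ℕ :=
  ((univ.powersetCard 3).filter (fun s => ∃ a b c : V,
    s = {a, b, c} ∧ a ≠ b ∧ a ≠ c ∧ b ≠ c ∧ H.Adj a b ∧ H.Adj b c ∧ ¬H.Adj a c)).card

/-- the complete bipartite graph `K_{m,n}` on the vertex set `[d]`, with parts
`{0,…,m-1}` and `{m,…,m+n-1}`. -/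
def bip (d m n : ℕ) : SimpleGraph (Fin d) where
  Adj i j := ((i : ℕ) < m ∧ m ≤ (j : ℕ) ∧ (j : ℕ) < m + n) ∨
    ((j : ℕ) < m ∧ m ≤ (i : ℕ) ∧ (i : ℕ) < m + n)
  symm := by constructor; intro i j h; tauto
  loopless := by constructor; intro i h; omega

/-- the copy of `H` on the first `r` vertices of `[d]`. -/
def embedGraph {r : ℕ} (H : SimpleGraph (Fin r)) (d : ℕ) : SimpleGraph (Fin d) where
  Adj i j := ∃ (hi : (i : ℕ) < r) (hj : (j : ℕ) < r), H.Adj ⟨i, hi⟩ ⟨j, hj⟩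
  symm := by constructor; rintro i j ⟨hi, hj, h⟩; exact ⟨hj, hi, h.symm⟩
  loopless := by constructor; rintro i ⟨hi, hj, h⟩; exact h.ne rfl

/-- the subgraph of `H` consisting of the edges in the connected component `c`. -/
def compGraph {V : Type*} (H : SimpleGraph V) (c : H.ConnectedComponent) :
    SimpleGraph V where
  Adj i j := H.Adj i j ∧ H.connectedComponentMk i = c
  symm := by
    constructor
    rintro i j ⟨h, hc⟩
    exact ⟨h.symm, (SimpleGraph.ConnectedComponent.sound h.symm.reachable).trans hc⟩
  loopless := by constructor; rintro i ⟨h, _⟩; exact h.ne rfl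

open scoped Classical in
/-- `|X_{i,j}|`: the number of vertices (other than `i, j`) adjacent to `i` but not `j`. -/
noncomputable def cardX {V : Type*} [Fintype V] (H : SimpleGraph V) (i j : V) : ℕ :=
  (univ.filter (fun ℓ => ℓ ≠ i ∧ ℓ ≠ j ∧ H.Adj i ℓ ∧ ¬ H.Adj j ℓ)).card

theorem Finset.card_filter_map {ι κ : Type*} (f : ι ↪ κ) (s : Finset ι) (p : κ → Prop)
    [DecidablePred p] : #{x ∈ s.map f | p x} = #{x ∈ s | p (f x)} := by
  rw [filter_map, card_map]
  rfl

section PairsInUnion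

variable {ι : Type*} [DecidableEq ι] {A B : Finset ι}

theorem Finset.powersetCard_two_union (h : Disjoint A B) :
    (A ∪ B).powersetCard 2 =
      A.powersetCard 2 ∪ B.powersetCard 2 ∪ (A ×ˢ B).image fun x => {x.1, x.2} := by
  ext s
  simp only [mem_union, mem_powersetCard, card_eq_two, mem_image, mem_product, Prod.exists]
  constructor
  · rintro ⟨hs, x, y, hxy, rfl⟩
    have hx := hs (mem_insert_self x {y})
    have hy := hs (mem_insert_of_mem (mem_singleton_self y))
    rw [mem_union] at hx hy
    rcases hx with hx | hx <;> rcases hy with hy | hy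
    · exact Or.inl (Or.inl ⟨by simp [insert_subset_iff, hx, hy], x, y, hxy, rfl⟩)
    · exact Or.inr ⟨x, y, ⟨hx, hy⟩, rfl⟩
    · exact Or.inr ⟨y, x, ⟨hy, hx⟩, pair_comm y x⟩
    · exact Or.inl (Or.inr ⟨by simp [insert_subset_iff, hx, hy], x, y, hxy, rfl⟩)
  · rintro ((⟨hs, hc⟩ | ⟨hs, hc⟩) | ⟨x, y, ⟨hx, hy⟩, rfl⟩)
    · exact ⟨hs.trans subset_union_left, hc⟩
    · exact ⟨hs.trans subset_union_right, hc⟩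
    · refine ⟨by simp [insert_subset_iff, hx, hy], x, y, ?_, rfl⟩
      rintro rfl
      exact disjoint_left.1 h hx hy

theorem Finset.card_filter_powersetCard_two_union (h : Disjoint A B) (p : Finset ι → Prop)
    [DecidablePred p] (hp : ∀ a ∈ A, ∀ b ∈ B, p {a, b}) :
    #{s ∈ (A ∪ B).powersetCard 2 | p s} =
      #{s ∈ A.powersetCard 2 | p s} + #{s ∈ B.powersetCard 2 | p s} + #A * #B := by
  have hAB : Disjoint (A.powersetCard 2) (B.powersetCard 2) := by
    refine disjoint_left.2 fun s hA hB => ?_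
    rw [mem_powersetCard] at hA hB
    obtain ⟨x, hx⟩ := card_pos.1 (hA.2.symm ▸ two_pos)
    exact disjoint_left.1 h (hA.1 hx) (hB.1 hx)
  have hC : Disjoint (A.powersetCard 2 ∪ B.powersetCard 2)
      ((A ×ˢ B).image fun x => {x.1, x.2}) := by
    refine disjoint_left.2 fun s hs hx => ?_
    obtain ⟨⟨a, b⟩, hab, rfl⟩ := mem_image.1 hx
    rw [mem_product] at hab
    rcases mem_union.1 hs with hs | hs <;> rw [mem_powersetCard, insert_subset_iff] at hs
    · exact disjoint_left.1 h (hs.1.2 (mem_singleton_self b)) hab.2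
    · exact disjoint_left.1 h hab.1 hs.1.1
  have hinj : Set.InjOn (fun x : ι × ι => ({x.1, x.2} : Finset ι)) ↑(A ×ˢ B) := by
    rintro ⟨a, b⟩ hab ⟨c, d⟩ hcd heq
    simp only [coe_product, Set.mem_prod, mem_coe] at hab hcd
    dsimp only at heq
    have hac : a ∈ ({c, d} : Finset ι) := heq ▸ mem_insert_self a {b}
    have hbd : b ∈ ({c, d} : Finset ι) := heq ▸ mem_insert_of_mem (mem_singleton_self b)
    simp only [mem_insert, mem_singleton] at hac hbd
    have hne : ∀ x ∈ A, ∀ y ∈ B, x ≠ y := fun x hx y hy hxy => disjoint_left.1 h hx (hxy ▸ hy)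
    rw [Prod.mk.injEq]
    exact ⟨hac.resolve_right (hne a hab.1 d hcd.2), hbd.resolve_left (hne c hcd.1 b hab.2).symm⟩
  rw [powersetCard_two_union h, filter_union, card_union_of_disjoint
    (disjoint_filter_filter hC), filter_union, card_union_of_disjoint (disjoint_filter_filter hAB),
    filter_image, card_image_of_injOn (hinj.mono (filter_subset _ _)),
    filter_true_of_mem (s := A ×ˢ B), card_product]
  rintro ⟨a, b⟩ hab
  exact hp a (mem_product.1 hab).1 b (mem_product.1 hab).2

end PairsInUnion

section EdgePairs

variable {V W : Type*} {G : SimpleGraph V} {G' : SimpleGraph W}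

theorem fourCycleOn_image_iff (φ : G ↪g G') (s : Set V) :
    fourCycleOn G' (φ '' s) ↔ fourCycleOn G s := by
  constructor
  · rintro ⟨_, _, _, _, ⟨a, ha, rfl⟩, ⟨b, hb, rfl⟩, ⟨c, hc, rfl⟩, ⟨d, hd, rfl⟩, h⟩
    simp only [φ.map_adj_iff, φ.injective.ne_iff] at h
    exact ⟨a, b, c, d, ha, hb, hc, hd, h⟩
  · rintro ⟨a, b, c, d, ha, hb, hc, hd, hab, hac, had, hbc, hbd, hcd, h₁, h₂, h₃, h₄⟩
    exact ⟨φ a, φ b, φ c, φ d, Set.mem_image_of_mem φ ha, Set.mem_image_of_mem φ hb,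
      Set.mem_image_of_mem φ hc, Set.mem_image_of_mem φ hd, φ.injective.ne hab,
      φ.injective.ne hac, φ.injective.ne had, φ.injective.ne hbc, φ.injective.ne hbd,
      φ.injective.ne hcd, φ.map_adj_iff.2 h₁, φ.map_adj_iff.2 h₂, φ.map_adj_iff.2 h₃,
      φ.map_adj_iff.2 h₄⟩

theorem epPair_map_iff (φ : G ↪g G') (e f : Sym2 V) :
    epPair G' (e.map φ) (f.map φ) ↔ epPair G e f := by
  have hshare : (∃ w, w ∈ e.map φ ∧ w ∈ f.map φ) ↔ ∃ v, v ∈ e ∧ v ∈ f := by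
    constructor
    · rintro ⟨w, hwe, hwf⟩
      obtain ⟨a, ha, rfl⟩ := Sym2.mem_map.1 hwe
      obtain ⟨b, hb, hba⟩ := Sym2.mem_map.1 hwf
      exact ⟨a, ha, φ.injective hba ▸ hb⟩
    · rintro ⟨v, hve, hvf⟩
      exact ⟨φ v, Sym2.mem_map.2 ⟨v, hve, rfl⟩, Sym2.mem_map.2 ⟨v, hvf, rfl⟩⟩
  have hset : {w | w ∈ e.map φ ∨ w ∈ f.map φ} = φ '' {v | v ∈ e ∨ v ∈ f} := by
    ext w
    simp only [Set.mem_ofPred_eq, Set.mem_image, Sym2.mem_map, or_and_right, exists_or]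
  rw [epPair, epPair, hshare, hset, fourCycleOn_image_iff]

theorem epPair_comm {e f : Sym2 V} : epPair G e f ↔ epPair G f e := by
  simp only [epPair, and_comm (a := _ ∈ e), or_comm (a := _ ∈ e)]

theorem forall_mem_pair_epPair_iff [DecidableEq V] {e f : Sym2 V} (hef : e ≠ f) :
    (∀ x ∈ ({e, f} : Finset (Sym2 V)), ∀ y ∈ ({e, f} : Finset (Sym2 V)), x ≠ y →
      epPair G x y) ↔ epPair G e f := by
  simp only [mem_insert, mem_singleton, forall_eq_or_imp, forall_eq, ne_eq, not_true_eq_false,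
    false_imp_iff, hef, Ne.symm hef, not_false_eq_true, forall_const, true_and, and_true]
  exact ⟨fun h => h.1, fun h => ⟨h, epPair_comm.1 h⟩⟩

theorem epPair_of_forall_not_adj {e f : Sym2 V} (h : ∀ u ∈ e, ∀ v ∈ f, ¬ G.Adj u v) :
    epPair G e f := by
  by_cases hshare : ∃ v, v ∈ e ∧ v ∈ f
  · exact Or.inl hshare
  refine Or.inr ⟨hshare, ?_⟩
  -- No edge joins `e` to `f`, so the path `a b c` of a 4-cycle stays inside one of the two
  -- edges, which has only two vertices.
  rintro ⟨a, b, c, _, ha, hb, hc, -, hab, hac, -, hbc, -, -, h₁, h₂, -, -⟩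
  have not_three : ∀ z : Sym2 V, a ∈ z → b ∈ z → c ∈ z → False := fun z ha hb hc => by
    rw [(Sym2.mem_and_mem_iff hab).1 ⟨ha, hb⟩, Sym2.mem_iff] at hc
    exact hc.elim hac.symm hbc.symm
  have step : ∀ {u v}, G.Adj u v → (u ∈ e ∨ u ∈ f) → (v ∈ e ∨ v ∈ f) →
      (u ∈ e ∧ v ∈ e) ∨ (u ∈ f ∧ v ∈ f) := by
    rintro u v huv (hu | hu) (hv | hv)
    · exact Or.inl ⟨hu, hv⟩
    · exact (h u hu v hv huv).elim
    · exact (h v hv u hu huv.symm).elim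
    · exact Or.inr ⟨hu, hv⟩
  rcases step h₁ ha hb with ⟨hae, hbe⟩ | ⟨haf, hbf⟩
  · rcases step h₂ (Or.inl hbe) hc with ⟨-, hce⟩ | ⟨hbf, -⟩
    · exact not_three e hae hbe hce
    · exact hshare ⟨b, hbe, hbf⟩
  · rcases step h₂ (Or.inr hbf) hc with ⟨hbe, -⟩ | ⟨-, hcf⟩
    · exact hshare ⟨b, hbe, hbf⟩
    · exact not_three f haf hbf hcf

theorem epPair_iff_of_forall_adj {e f : Sym2 V} (he : e ∈ G.edgeSet) (hf : f ∈ G.edgeSet)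
    (h : ∀ u ∈ e, ∀ v ∈ f, u ≠ v → G.Adj u v) : epPair G e f ↔ ∃ v, v ∈ e ∧ v ∈ f := by
  refine ⟨fun hp => ?_, Or.inl⟩
  by_contra hshare
  refine (hp.resolve_left hshare).2 ?_
  induction e with | _ a b => ?_
  induction f with | _ c d => ?_
  simp only [Sym2.mem_iff, not_exists, not_and, not_or, forall_eq_or_imp, forall_eq] at hshare h
  rw [mem_edgeSet] at he hf
  obtain ⟨⟨hac, had⟩, hbc, hbd⟩ := hshare
  -- disjoint edges `ab`, `cd` inside a clique span the 4-cycle `a c b d`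
  exact ⟨a, c, b, d, by simp, by simp, by simp, by simp, hac, he.ne, had, Ne.symm hbc, hf.ne,
    hbd, h.1.1 hac, (h.2.1 hbc).symm, h.2.2 hbd, (h.1.2 had).symm⟩

end EdgePairs

section DisjointSum

variable {V W : Type*} {G : SimpleGraph V} {H : SimpleGraph W}

open scoped Classical in
theorem card_filter_epPair_map [Fintype V] [Fintype W] (φ : G ↪g H) :
    #{s ∈ (G.edgeFinset.map φ.toEmbedding.sym2Map).powersetCard 2 |
      ∀ e ∈ s, ∀ f ∈ s, e ≠ f → epPair H e f} = epsilon G := by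
  rw [powersetCard_map, card_filter_map, epsilon]
  refine congrArg card (Finset.ext fun s => ?_)
  simp only [mem_filter, mapEmbedding_apply, forall_mem_map,
    Function.Embedding.sym2Map_apply, RelEmbedding.coe_toEmbedding,
    (Sym2.map.injective φ.injective).ne_iff, epPair_map_iff]

theorem epPair_sum_map_inl_map_inr (e : Sym2 V) (f : Sym2 W) :
    epPair (G ⊕g H) (e.map Sum.inl) (f.map Sum.inr) :=
  epPair_of_forall_not_adj fun u hu v hv => by
    obtain ⟨a, -, rfl⟩ := Sym2.mem_map.1 hu
    obtain ⟨b, -, rfl⟩ := Sym2.mem_map.1 hv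
    exact not_adj_sum_inl_inr a b

variable [Fintype V] [Fintype W]

open scoped Classical in
theorem edgeFinset_sum : (G ⊕g H).edgeFinset =
    G.edgeFinset.map Function.Embedding.inl.sym2Map ∪
      H.edgeFinset.map Function.Embedding.inr.sym2Map := by
  have hsum : G ⊕g H = G.map Function.Embedding.inl ⊔
      H.map Function.Embedding.inr := by
    ext (u | u) (v | v) <;> simp
  rw [← coe_inj, coe_union, coe_edgeFinset, coe_map, coe_map, coe_edgeFinset, coe_edgeFinset,
    hsum, edgeSet_sup, edgeSet_map, edgeSet_map]

open scoped Classical in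
theorem epsilon_sum :
    epsilon (G ⊕g H) = epsilon G + epsilon H + Nat.card G.edgeSet * Nat.card H.edgeSet := by
  have hdisj : Disjoint (G.edgeFinset.map Function.Embedding.inl.sym2Map)
      (H.edgeFinset.map Function.Embedding.inr.sym2Map) := by
    rw [Finset.disjoint_left]
    rintro _ he hf
    obtain ⟨e, -, rfl⟩ := mem_map.1 he
    obtain ⟨f, -, hfe⟩ := mem_map.1 hf
    induction e with | _ a b => ?_
    have ha : Sum.inl a ∈ f.map Sum.inr := by simp_all
    obtain ⟨c, -, hc⟩ := Sym2.mem_map.1 ha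
    exact Sum.inr_ne_inl hc
  rw [epsilon, edgeFinset_sum, card_filter_powersetCard_two_union hdisj, card_map, card_map, edgeFinset_card,
    edgeFinset_card, Nat.card_eq_fintype_card, Nat.card_eq_fintype_card]
  · exact congrArg₂ (· + ·) (congrArg₂ (· + ·) (card_filter_epPair_map Embedding.sumInl)
      (card_filter_epPair_map Embedding.sumInr)) rfl
  · intro a ha b hb
    rw [forall_mem_pair_epPair_iff fun hab : a = b => Finset.disjoint_left.1 hdisj ha (hab ▸ hb)]
    obtain ⟨e, -, rfl⟩ := mem_map.1 ha
    obtain ⟨f, -, rfl⟩ := mem_map.1 hb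
    exact epPair_sum_map_inl_map_inr e f

end DisjointSum

section CompleteGraph

variable {V : Type*} [Fintype V]

theorem sum_degree_choose_two [DecidableEq V] (G : SimpleGraph V) [DecidableRel G.Adj] :
    ∑ v, (G.degree v).choose 2 = #{s ∈ G.edgeFinset.powersetCard 2 | ∃ v, ∀ e ∈ s, v ∈ e} := by
  have hpairs : {s ∈ G.edgeFinset.powersetCard 2 | ∃ v, ∀ e ∈ s, v ∈ e} =
      univ.biUnion fun v => (G.incidenceFinset v).powersetCard 2 := by
    ext s
    simp only [mem_filter, mem_powersetCard, mem_biUnion, mem_univ, true_and,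
      incidenceFinset_eq_filter, subset_iff]
    constructor
    · rintro ⟨⟨hE, hs⟩, v, hv⟩
      exact ⟨v, fun e he => ⟨hE he, hv e he⟩, hs⟩
    · rintro ⟨v, hv, hs⟩
      exact ⟨⟨fun e he => (hv he).1, hs⟩, v, fun e he => (hv he).2⟩
  rw [hpairs, card_biUnion]
  · simp only [card_powersetCard, card_incidenceFinset_eq_degree]
  · -- two distinct edges share at most one vertex
    intro v _ w _ hvw
    refine disjoint_left.2 fun s hv hw => ?_
    rw [mem_powersetCard, incidenceFinset_eq_filter] at hv hw
    obtain ⟨e, f, hef, rfl⟩ := card_eq_two.1 hv.2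
    have hvw_edge : ∀ x ∈ ({e, f} : Finset (Sym2 V)), x = s(v, w) := fun x hx =>
      (Sym2.mem_and_mem_iff hvw).1 ⟨(mem_filter.1 (hv.1 hx)).2, (mem_filter.1 (hw.1 hx)).2⟩
    exact hef ((hvw_edge e (by simp)).trans (hvw_edge f (by simp)).symm)

open scoped Classical in
theorem epsilon_top :
    epsilon (⊤ : SimpleGraph V) = Fintype.card V * (Fintype.card V - 1).choose 2 := by
  have hshare : epsilon (⊤ : SimpleGraph V) =
      #{s ∈ (⊤ : SimpleGraph V).edgeFinset.powersetCard 2 | ∃ v, ∀ e ∈ s, v ∈ e} := by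
    refine congrArg card (Finset.ext fun s => ?_)
    simp only [mem_filter, mem_powersetCard, subset_iff, mem_edgeFinset]
    refine and_congr_right fun ⟨hsub, hcard⟩ => ?_
    obtain ⟨e, f, hef, rfl⟩ := card_eq_two.1 hcard
    have he := hsub (mem_insert_self e {f})
    have hf := hsub (mem_insert_of_mem (mem_singleton_self f))
    rw [forall_mem_pair_epPair_iff hef, epPair_iff_of_forall_adj he hf fun _ _ _ _ h => h]
    simp only [mem_insert, mem_singleton, forall_eq_or_imp, forall_eq]
  rw [hshare, ← sum_degree_choose_two]
  simp

end CompleteGraph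

theorem compl_completeBipartiteGraph_eq_sum_top (α β : Type*) :
    (completeBipartiteGraph α β)ᶜ = (⊤ : SimpleGraph α) ⊕g (⊤ : SimpleGraph β) := by
  ext (u | u) (v | v) <;> simp

theorem Nat.mul_choose_two_pred (n : ℕ) : n * (n - 1).choose 2 = n * (n - 1) * (n - 2) / 2 := by
  rw [Nat.choose_two_right, ← Nat.mul_div_assoc _ (n - 1).even_mul_pred_self.two_dvd, mul_assoc,
    Nat.sub_sub]

theorem epsilon_disjoint_cliques (m n : ℕ) :
    epsilon ((completeBipartiteGraph (Fin m) (Fin n))ᶜ)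
      = m * (m - 1) * (m - 2) / 2 + n * (n - 1) * (n - 2) / 2
        + m.choose 2 * n.choose 2 := by
  rw [compl_completeBipartiteGraph_eq_sum_top, epsilon_sum, epsilon_top, epsilon_top]
  simp only [Nat.card_eq_fintype_card, ← edgeFinset_card, card_edgeFinset_top_eq_card_choose_two,
    Fintype.card_fin, Nat.mul_choose_two_pred]
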